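/- arXiv:2310.18436 — 3 statements merged into one kernel-verified Lean document; each statement's English description precedes it below -/
import Mathlib

section
/- Suppose for the homogeneous system with solution operator S_t = e^{tA} the single-time observability estimate ‖S_T v‖ ≤ (C_{T,τ} ‖1_ω S_{T−τ} v‖)^β ‖v‖^{1−β} holds for all v in the Hilbert space H, with β ∈ (0,1) and C_{T,τ} > 0. Then for every ε > 0 and every initial datum Ψ⁰ with ‖Ψ⁰‖ = 1, there exists an impulse control h ∈ H supported in ω (i.e. h = 1_ω h) with ‖h‖ ≤ C_{T,τ} ε^{−(1−β)/β} such that the controlled state Ψ(T) = S_T Ψ⁰ + S_{T−τ} (1_ω h) satisfies ‖Ψ(T)‖ ≤ ε. -/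
open RealInnerProductSpace

/-!
Tikhonov-regularised HUM. Let `L = S_{T-τ} ∘ 1_ω`, so that `L* = 1_ω ∘ S_{T-τ}`, write
`M = C ε^{-(1-β)/β}` for the announced cost and regularise with `α = (ε/M)²`. Since
`L L* + α` is coercive, there is `m` with `S_T Ψ⁰ + L L* m = -α m`; the control is `h = L* m`
and the final state is `-α m`. Pairing the equation with `m` gives
`‖h‖² + α‖m‖² = -⟪S_T Ψ⁰, m⟫ ≤ ‖S_T m‖`. The cost `M` is exactly the one for which the
observability estimate reads `‖S_T m‖ ≤ (M‖h‖)^β (ε‖m‖)^{1-β}`, and by weighted AM-GM this is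
at most `M (β‖h‖ + (1-β) u)` with `u = ε‖m‖/M`. As `α‖m‖² = u²`, both `‖h‖` and `u` are
at most `M`, i.e. `‖h‖ ≤ M` and `‖α m‖ = (ε/M) u ≤ ε`.
-/

section Tikhonov

open ContinuousLinearMap

variable {E F : Type*} [NormedAddCommGroup E] [InnerProductSpace ℝ E] [CompleteSpace E]
  [NormedAddCommGroup F] [InnerProductSpace ℝ F] [CompleteSpace F]

theorem inner_apply_adjoint_self_eq_norm_sq (L : E →L[ℝ] F) (v : F) :
    ⟪L (adjoint L v), v⟫ = ‖adjoint L v‖ ^ 2 := by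
  rw [← adjoint_inner_right, real_inner_self_eq_norm_sq]

theorem exists_add_apply_adjoint_eq_neg_smul (L : E →L[ℝ] F) (x : F) {α : ℝ} (hα : 0 < α) :
    ∃ m : F, x + L (adjoint L m) = -(α • m) := by
  set A : F →L[ℝ] F := L ∘L adjoint L + α • 1
  have hcoercive : ∀ v, ‖v‖ ^ 2 * (⟨α, hα.le⟩ : NNReal) ≤ ‖⟪A v, v⟫‖ := fun v ↦ by
    have hAv : ⟪A v, v⟫ = ‖adjoint L v‖ ^ 2 + α * ‖v‖ ^ 2 := by
      simp only [A, add_apply, comp_apply, smul_apply, one_apply_eq_self, inner_add_left,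
        real_inner_smul_left, inner_apply_adjoint_self_eq_norm_sq, real_inner_self_eq_norm_sq]
    rw [hAv, Real.norm_of_nonneg (by positivity)]
    change ‖v‖ ^ 2 * α ≤ _
    nlinarith [sq_nonneg ‖adjoint L v‖]
  obtain ⟨m, hm⟩ := (isUnit_iff_bijective.mp
    (isUnit_of_forall_le_norm_inner_map A (c := ⟨α, hα.le⟩) hα hcoercive)).surjective (-x)
  refine ⟨m, ?_⟩
  simp only [A, add_apply, comp_apply, smul_apply, one_apply_eq_self] at hm
  linear_combination (norm := module) hm

theorem norm_adjoint_sq_add_mul_norm_sq_eq_neg_inner {L : E →L[ℝ] F} {x m : F} {α : ℝ}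
    (hm : x + L (adjoint L m) = -(α • m)) :
    ‖adjoint L m‖ ^ 2 + α * ‖m‖ ^ 2 = -⟪x, m⟫ := by
  have h := congrArg (⟪·, m⟫) hm
  simp only [inner_add_left, inner_neg_left, real_inner_smul_left,
    inner_apply_adjoint_self_eq_norm_sq, real_inner_self_eq_norm_sq] at h
  linarith

end Tikhonov

theorem le_and_le_of_sq_add_sq_le {a u M β : ℝ} (hM : 0 ≤ M) (hβ0 : 0 ≤ β) (hβ1 : β ≤ 1)
    (h : a ^ 2 + u ^ 2 ≤ M * (β * a + (1 - β) * u)) : a ≤ M ∧ u ≤ M := by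
  rcases le_total u a with hua | hau
  · have : a ^ 2 ≤ M * a := by nlinarith [mul_le_mul_of_nonneg_left hua (sub_nonneg.2 hβ1)]
    have : a ≤ M := by nlinarith
    exact ⟨this, hua.trans this⟩
  · have : u ^ 2 ≤ M * u := by nlinarith [mul_le_mul_of_nonneg_left hau hβ0]
    have : u ≤ M := by nlinarith
    exact ⟨hau.trans this, this⟩

theorem mul_rpow_mul_rpow_eq {C ε β a b : ℝ} (hC : 0 ≤ C) (hε : 0 < ε) (hβ : β ≠ 0)
    (ha : 0 ≤ a) (hb : 0 ≤ b) :
    (C * ε ^ (-(1 - β) / β) * a) ^ β * (ε * b) ^ (1 - β) = (C * a) ^ β * b ^ (1 - β) := by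
  rw [Real.mul_rpow (by positivity) ha, Real.mul_rpow hC (by positivity), ← Real.rpow_mul hε.le,
    div_mul_cancel₀ _ hβ, Real.mul_rpow hε.le hb, Real.mul_rpow hC ha, Real.rpow_neg hε.le]
  field_simp

theorem impulse_controllability_from_observability_general
    {H : Type*} [NormedAddCommGroup H] [InnerProductSpace ℝ H] [CompleteSpace H]
    (S : ℝ → H →L[ℝ] H) (Pω : H →L[ℝ] H)
    (T τ C β : ℝ) (hC : 0 < C)
    (hSTsa : IsSelfAdjoint (S T)) (hSTτsa : IsSelfAdjoint (S (T - τ)))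
    (hPωsa : IsSelfAdjoint Pω) (hPωproj : Pω.comp Pω = Pω)
    (hβ : β ∈ Set.Ioo (0:ℝ) 1)
    (hobs : ∀ v : H, ‖S T v‖ ≤ (C * ‖Pω (S (T - τ) v)‖) ^ β * ‖v‖ ^ (1 - β)) :
    ∀ ε : ℝ, 0 < ε → ∀ Ψ0 : H, ‖Ψ0‖ = 1 →
      ∃ h : H, Pω h = h ∧ ‖h‖ ≤ C * ε ^ (-(1 - β)/β) ∧
        ‖S T Ψ0 + S (T - τ) (Pω h)‖ ≤ ε := by
  intro ε hε Ψ0 hΨ0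
  set M := C * ε ^ (-(1 - β) / β)
  have hM : 0 < M := by positivity
  have hadjoint : (S (T - τ) ∘L Pω).adjoint = Pω ∘L S (T - τ) := by
    rw [ContinuousLinearMap.adjoint_comp, hPωsa.adjoint_eq, hSTτsa.adjoint_eq]
  obtain ⟨m, hm⟩ := exists_add_apply_adjoint_eq_neg_smul (S (T - τ) ∘L Pω) (S T Ψ0)
    (α := (ε / M) ^ 2) (by positivity)
  have henergy := norm_adjoint_sq_add_mul_norm_sq_eq_neg_inner hm
  simp only [hadjoint, ContinuousLinearMap.comp_apply] at hm henergy
  set h := Pω (S (T - τ) m)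
  have hquadratic : ‖h‖ ^ 2 + (ε / M * ‖m‖) ^ 2 ≤ M * (β * ‖h‖ + (1 - β) * (ε / M * ‖m‖)) :=
    calc ‖h‖ ^ 2 + (ε / M * ‖m‖) ^ 2 = -⟪S T Ψ0, m⟫ := by rw [← henergy]; ring
    _ = -⟪Ψ0, S T m⟫ := congrArg _ (hSTsa.isSymmetric Ψ0 m)
    _ ≤ ‖Ψ0‖ * ‖S T m‖ := (neg_le_abs _).trans (abs_real_inner_le_norm _ _)
    _ ≤ (M * ‖h‖) ^ β * (ε * ‖m‖) ^ (1 - β) := by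
      rw [hΨ0, one_mul, mul_rpow_mul_rpow_eq hC.le hε hβ.1.ne' (norm_nonneg _) (norm_nonneg _)]
      exact hobs m
    _ ≤ β * (M * ‖h‖) + (1 - β) * (ε * ‖m‖) :=
      Real.geom_mean_le_arith_mean2_weighted hβ.1.le (by linarith [hβ.2]) (by positivity)
        (by positivity) (by ring)
    _ = M * (β * ‖h‖ + (1 - β) * (ε / M * ‖m‖)) := by field_simp
  obtain ⟨hcost, hscaled⟩ := le_and_le_of_sq_add_sq_le hM.le hβ.1.le hβ.2.le hquadratic
  refine ⟨h, congr($hPωproj _), hcost, ?_⟩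
  rw [hm, norm_neg, norm_smul, Real.norm_of_nonneg (by positivity)]
  calc (ε / M) ^ 2 * ‖m‖ = ε / M * (ε / M * ‖m‖) := by ring
    _ ≤ ε / M * M := by gcongr
    _ = ε := div_mul_cancel₀ ε hM.ne'

/-- Null approximate impulse controllability with cost bound from the
single-time observability (logarithmic convexity) estimate
`‖S_T v‖ ≤ (C ‖1_ω S_{T−τ} v‖)^β ‖v‖^{1−β}`: for every `ε > 0` and every
normalized initial datum `Ψ⁰` there is an impulse control `h` supported in `ω`
with `‖h‖ ≤ C ε^{−(1−β)/β}` such that `‖S_T Ψ⁰ + S_{T−τ}(1_ω h)‖ ≤ ε`. -/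
theorem impulse_controllability_from_observability
    {H : Type*} [NormedAddCommGroup H] [InnerProductSpace ℝ H] [CompleteSpace H]
    (S : ℝ → H →L[ℝ] H) (Pω : H →L[ℝ] H)
    (T τ C β : ℝ) (hτ : 0 < τ) (hτT : τ < T) (hC : 0 < C)
    (hSTsa : IsSelfAdjoint (S T)) (hSTτsa : IsSelfAdjoint (S (T - τ)))
    (hPωsa : IsSelfAdjoint Pω) (hPωproj : Pω.comp Pω = Pω)
    (hβ : β ∈ Set.Ioo (0:ℝ) 1)
    (hobs : ∀ v : H, ‖S T v‖ ≤ (C * ‖Pω (S (T - τ) v)‖) ^ β * ‖v‖ ^ (1 - β)) :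
    ∀ ε : ℝ, 0 < ε → ∀ Ψ0 : H, ‖Ψ0‖ = 1 →
      ∃ h : H, Pω h = h ∧ ‖h‖ ≤ C * ε ^ (-(1 - β)/β) ∧
        ‖S T Ψ0 + S (T - τ) (Pω h)‖ ≤ ε :=
  impulse_controllability_from_observability_general S Pω T τ C β hC hSTsa hSTτsa hPωsa hPωproj hβ
    hobs
end

section
/- Let H be a Hilbert space, S, L : H → H bounded linear operators, and ε > 0. Suppose that for some constant K_ε > 0 and every g ∈ H with ‖g‖ = 1 there exists h ∈ H with ‖h‖ ≤ K_ε and ‖Sg + L*h‖ ≤ ε. Then for every v ∈ H, ‖S*v‖ ≤ ε‖v‖ + K_ε‖Lv‖. -/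
/-!
Testing `S* v` against the unit vector `g` in its direction gives `‖S* v‖ = ⟪S g, v⟫`. Splitting
`S g = (S g + L* h) - L* h` with the control `h` provided for `g`, the first term pairs with `v` to
at most `ε ‖v‖`, and the second pairs to `⟪h, L v⟫`, which is at most `K ‖L v‖`.
-/

open RealInnerProductSpace

section

variable {H : Type*} [NormedAddCommGroup H] [InnerProductSpace ℝ H]

theorem norm_le_of_forall_norm_eq_one_inner_le {w : H} {c : ℝ} (hc : 0 ≤ c)
    (hw : ∀ g : H, ‖g‖ = 1 → ⟪g, w⟫ ≤ c) : ‖w‖ ≤ c := by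
  rcases eq_or_ne w 0 with rfl | hw0
  · simpa using hc
  have hnorm : 0 < ‖w‖ := norm_pos_iff.mpr hw0
  have hunit : ‖‖w‖⁻¹ • w‖ = 1 := by
    rw [norm_smul, norm_inv, norm_norm, inv_mul_cancel₀ hnorm.ne']
  calc ‖w‖ = ⟪‖w‖⁻¹ • w, w⟫ := by
        rw [real_inner_smul_left, real_inner_self_eq_norm_sq]
        field_simp
    _ ≤ c := hw _ hunit

variable [CompleteSpace H]

theorem inner_apply_le_norm_add_adjoint_mul_norm_add (S L : H →L[ℝ] H) (g h v : H) :
    ⟪S g, v⟫ ≤ ‖S g + L.adjoint h‖ * ‖v‖ + ‖h‖ * ‖L v‖ := by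
  have hsplit : ⟪S g, v⟫ = ⟪S g + L.adjoint h, v⟫ - ⟪h, L v⟫ := by
    rw [inner_add_left, ContinuousLinearMap.adjoint_inner_left]
    ring
  have hneg : -⟪h, L v⟫ ≤ ‖h‖ * ‖L v‖ := (neg_le_abs _).trans (abs_real_inner_le_norm _ _)
  linarith [real_inner_le_norm (S g + L.adjoint h) v]

end

/-- Duality: null approximate impulse controllability with cost `K_ε` implies
the observability estimate `‖S*v‖ ≤ ε‖v‖ + K_ε‖Lv‖`. -/
theorem controllability_implies_observability
    {H : Type*} [NormedAddCommGroup H] [InnerProductSpace ℝ H] [CompleteSpace H]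
    (S L : H →L[ℝ] H) (ε K : ℝ) (hε : 0 < ε) (hK : 0 < K)
    (hctrl : ∀ g : H, ‖g‖ = 1 →
      ∃ h : H, ‖h‖ ≤ K ∧ ‖S g + L.adjoint h‖ ≤ ε) :
    ∀ v : H, ‖S.adjoint v‖ ≤ ε * ‖v‖ + K * ‖L v‖ := by
  intro v
  refine norm_le_of_forall_norm_eq_one_inner_le (by positivity) fun g hg => ?_
  obtain ⟨h, hh, hcontrol⟩ := hctrl g hg
  calc ⟪g, S.adjoint v⟫ = ⟪S g, v⟫ := ContinuousLinearMap.adjoint_inner_right S g v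
    _ ≤ ‖S g + L.adjoint h‖ * ‖v‖ + ‖h‖ * ‖L v‖ := inner_apply_le_norm_add_adjoint_mul_norm_add S L g h v
    _ ≤ ε * ‖v‖ + K * ‖L v‖ := by gcongr
end

section
/- Let H be a Hilbert space, S, L : H → H bounded linear operators, ε > 0 and K > 0 such that the observability estimate ‖S*v‖ ≤ ε‖v‖ + K‖Lv‖ holds for all v ∈ H. Then for every g ∈ H, the point Sg lies in the closure of the set { −L*h + r : ‖h‖ ≤ K‖g‖, ‖r‖ ≤ ε‖g‖ }; equivalently, inf{ ‖Sg + L*h‖ : ‖h‖ ≤ K‖g‖ } ≤ ε‖g‖. -/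
open RealInnerProductSpace

/-- Converse duality: the observability estimate `‖S*v‖ ≤ ε‖v‖ + K‖Lv‖` implies
null approximate impulse controllability with control cost at most `K`:
`inf{‖Sg + L*h‖ : ‖h‖ ≤ K‖g‖} ≤ ε‖g‖`. -/
theorem observability_implies_controllability
    {H : Type*} [NormedAddCommGroup H] [InnerProductSpace ℝ H] [CompleteSpace H]
    (S L : H →L[ℝ] H) (ε K : ℝ) (hε : 0 < ε) (hK : 0 < K)
    (hobs : ∀ v : H, ‖S.adjoint v‖ ≤ ε * ‖v‖ + K * ‖L v‖) :
    ∀ g : H, ∀ δ : ℝ, 0 < δ →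
      ∃ h : H, ‖h‖ ≤ K * ‖g‖ ∧ ‖S g + L.adjoint h‖ ≤ ε * ‖g‖ + δ := by
  intro g δ hδ
  by_contra hcon
  push_neg at hcon
  -- hcon : ∀ h, ‖h‖ ≤ K*‖g‖ → ε*‖g‖ + δ < ‖S g + L.adjoint h‖
  have hKg : 0 ≤ K * ‖g‖ := by positivity
  have hεg : 0 ≤ ε * ‖g‖ := by positivity
  set C : Set H :=
    {x | ∃ h r : H, ‖h‖ ≤ K * ‖g‖ ∧ ‖r‖ ≤ ε * ‖g‖ ∧ x = -L.adjoint h + r} with hCdef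
  have hCconv : Convex ℝ C := by
    rintro x ⟨h1, r1, hh1, hr1, rfl⟩ y ⟨h2, r2, hh2, hr2, rfl⟩ a b ha hb hab
    refine ⟨a • h1 + b • h2, a • r1 + b • r2, ?_, ?_, ?_⟩
    · calc ‖a • h1 + b • h2‖ ≤ ‖a • h1‖ + ‖b • h2‖ := norm_add_le _ _
        _ = a * ‖h1‖ + b * ‖h2‖ := by
            simp [norm_smul, abs_of_nonneg ha, abs_of_nonneg hb]
        _ ≤ a * (K * ‖g‖) + b * (K * ‖g‖) := by
            gcongr
        _ = K * ‖g‖ := by rw [← add_mul, hab, one_mul]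
    · calc ‖a • r1 + b • r2‖ ≤ ‖a • r1‖ + ‖b • r2‖ := norm_add_le _ _
        _ = a * ‖r1‖ + b * ‖r2‖ := by
            simp [norm_smul, abs_of_nonneg ha, abs_of_nonneg hb]
        _ ≤ a * (ε * ‖g‖) + b * (ε * ‖g‖) := by
            gcongr
        _ = ε * ‖g‖ := by rw [← add_mul, hab, one_mul]
    · simp only [map_add, map_smul, smul_add, smul_neg]
      abel
  have hSg_not : S g ∉ closure C := by
    intro hmem
    rw [Metric.mem_closure_iff] at hmem
    obtain ⟨b, hbC, hbd⟩ := hmem δ hδ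
    obtain ⟨h, r, hh, hr, rfl⟩ := hbC
    have h1 := hcon h hh
    have : ‖S g + L.adjoint h‖ ≤ ‖S g - (-L.adjoint h + r)‖ + ‖r‖ := by
      have : S g + L.adjoint h = (S g - (-L.adjoint h + r)) + r := by abel
      rw [this]; exact norm_add_le _ _
    have hd : dist (S g) (-L.adjoint h + r) = ‖S g - (-L.adjoint h + r)‖ :=
      dist_eq_norm _ _
    linarith [hbd.le, hd ▸ hbd]
  obtain ⟨f, u, hfu, huf⟩ :=
    geometric_hahn_banach_closed_point hCconv.closure isClosed_closure hSg_not
  set v : H := (InnerProductSpace.toDual ℝ H).symm f with hv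
  have hf : ∀ x : H, f x = ⟪v, x⟫ := fun x =>
    (InnerProductSpace.toDual_symm_apply).symm
  -- bound: K‖g‖‖Lv‖ + ε‖g‖‖v‖ < u
  set h₀ : H := -((K * ‖g‖) • (‖L v‖⁻¹ • L v)) with hh₀
  set r₀ : H := (ε * ‖g‖) • (‖v‖⁻¹ • v) with hr₀
  have hnorm_aux : ∀ w : H, ‖‖w‖⁻¹ • w‖ ≤ 1 := by
    intro w
    rcases eq_or_ne w 0 with h | h
    · simp [h]
    · rw [norm_smul, norm_inv, norm_norm, inv_mul_cancel₀ (norm_ne_zero_iff.mpr h)]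
  have hinner_aux : ∀ w : H, ⟪w, ‖w‖⁻¹ • w⟫ = ‖w‖ := by
    intro w
    rw [real_inner_smul_right, real_inner_self_eq_norm_mul_norm]
    rcases eq_or_ne w 0 with h | h
    · simp [h]
    · field_simp
  have hh₀n : ‖h₀‖ ≤ K * ‖g‖ := by
    rw [hh₀, norm_neg, norm_smul, Real.norm_eq_abs, abs_of_nonneg hKg]
    calc K * ‖g‖ * ‖‖L v‖⁻¹ • L v‖ ≤ K * ‖g‖ * 1 := by
          gcongr; exact hnorm_aux _
      _ = K * ‖g‖ := mul_one _
  have hr₀n : ‖r₀‖ ≤ ε * ‖g‖ := by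
    rw [hr₀, norm_smul, Real.norm_eq_abs, abs_of_nonneg hεg]
    calc ε * ‖g‖ * ‖‖v‖⁻¹ • v‖ ≤ ε * ‖g‖ * 1 := by
          gcongr; exact hnorm_aux _
      _ = ε * ‖g‖ := mul_one _
  have hx₀ : (-L.adjoint h₀ + r₀) ∈ C := ⟨h₀, r₀, hh₀n, hr₀n, rfl⟩
  have hfx₀ : f (-L.adjoint h₀ + r₀) < u := hfu _ (subset_closure hx₀)
  have e1 : ⟪L v, h₀⟫ = -(K * ‖g‖ * ‖L v‖) := by
    rw [hh₀, inner_neg_right, real_inner_smul_right, hinner_aux]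
  have e2 : ⟪v, r₀⟫ = ε * ‖g‖ * ‖v‖ := by
    rw [hr₀, real_inner_smul_right, hinner_aux]
  have hval : f (-L.adjoint h₀ + r₀) = K * ‖g‖ * ‖L v‖ + ε * ‖g‖ * ‖v‖ := by
    rw [hf, inner_add_right, inner_neg_right, ContinuousLinearMap.adjoint_inner_right,
      e1, e2]
    ring
  have hbound : K * ‖g‖ * ‖L v‖ + ε * ‖g‖ * ‖v‖ < u := hval ▸ hfx₀
  -- now the contradiction
  have h1 : f (S g) = ⟪S.adjoint v, g⟫ := by
    rw [hf, ContinuousLinearMap.adjoint_inner_left]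
  have h2 : ⟪S.adjoint v, g⟫ ≤ ‖S.adjoint v‖ * ‖g‖ := real_inner_le_norm _ _
  have h3 : ‖S.adjoint v‖ * ‖g‖ ≤ (ε * ‖v‖ + K * ‖L v‖) * ‖g‖ := by
    gcongr; exact hobs v
  nlinarith [huf, norm_nonneg g]
end
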